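/- arXiv:1402.2594 — 4 statements merged into one kernel-verified Lean document; each statement's English description precedes it below -/
import Mathlib

section
/- Let U₁, U₂ ≥ 0 and suppose for some α ∈ (0,1) the quantity R satisfies R ≤ α·L̂ + U₁/α + U₂, where L̂ ≥ 0 is the learner's cumulative loss and R = L̂ - L* with L* ≥ 0. Then R ≤ 4√(L*·U₁) + 12·U₁ + 4·U₂ (choosing α appropriately and distinguishing the cases L* ≥ 4U₁ and L* < 4U₁). -/
theorem optimistic_rate_conversion (U₁ U₂ Lhat Lstar R : ℝ)
    (hU₁ : 0 ≤ U₁) (hU₂ : 0 ≤ U₂) (hLhat : 0 ≤ Lhat) (hLstar : 0 ≤ Lstar)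
    (hR : R = Lhat - Lstar)
    (hbound : ∀ α : ℝ, 0 < α → α < 1 → R ≤ α * Lhat + U₁ / α + U₂) :
    R ≤ 4 * Real.sqrt (Lstar * U₁) + 12 * U₁ + 4 * U₂ := by
  have hs : 0 ≤ Real.sqrt (Lstar * U₁) := Real.sqrt_nonneg _
  -- key: for 0 < α ≤ 1/2, R ≤ 2*α*Lstar + 2*U₁/α + 2*U₂
  have key : ∀ α : ℝ, 0 < α → α ≤ 1/2 → R ≤ 2*(α*Lstar) + 2*(U₁/α) + 2*U₂ := by
    intro α hα hα2
    have h1 : α < 1 := lt_of_le_of_lt hα2 (by norm_num)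
    have hb := hbound α hα h1
    have hLhat' : Lhat = R + Lstar := by rw [hR]; ring
    rw [hLhat'] at hb
    -- R ≤ α*(R+Lstar) + U₁/α + U₂ ⇒ (1-α)*R ≤ α*Lstar + U₁/α + U₂
    have h2 : (1 - α) * R ≤ α * Lstar + U₁/α + U₂ := by nlinarith
    have h3 : (1:ℝ)/2 ≤ 1 - α := by linarith
    have hUa : 0 ≤ U₁ / α := div_nonneg hU₁ hα.le
    have hαL : 0 ≤ α * Lstar := mul_nonneg hα.le hLstar
    rcases le_or_gt R 0 with hR0 | hR0
    · linarith
    · nlinarith [mul_le_mul_of_nonneg_right h3 hR0.le]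
  rcases eq_or_lt_of_le hU₁ with h0 | hU1
  · -- U₁ = 0 : show R ≤ U₂
    have hRU : R ≤ U₂ := by
      apply le_of_forall_pos_le_add
      intro ε hε
      have hd : 0 < Lhat + 1 := by linarith
      set α := min (1/2 : ℝ) (ε / (Lhat + 1)) with hαdef
      have hα : 0 < α := lt_min (by norm_num) (div_pos hε hd)
      have hα2 : α ≤ 1/2 := min_le_left _ _
      have hb := hbound α hα (lt_of_le_of_lt hα2 (by norm_num))
      have h4 : α * Lhat ≤ ε := by
        have h5 : α ≤ ε / (Lhat + 1) := min_le_right _ _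
        calc α * Lhat ≤ (ε / (Lhat + 1)) * Lhat :=
              mul_le_mul_of_nonneg_right h5 hLhat
          _ ≤ (ε / (Lhat + 1)) * (Lhat + 1) :=
              mul_le_mul_of_nonneg_left (by linarith) (div_pos hε hd).le
          _ = ε := div_mul_cancel₀ _ (ne_of_gt hd)
      have h6 : U₁ / α = 0 := by rw [← h0]; simp
      rw [h6] at hb
      linarith
    nlinarith
  · rcases le_or_gt (4 * U₁) Lstar with hc | hc
    · -- Lstar ≥ 4U₁ > 0
      have hL : 0 < Lstar := by linarith
      set α := Real.sqrt (U₁ / Lstar) with hα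
      have hα0 : 0 < α := Real.sqrt_pos.2 (div_pos hU1 hL)
      have hα2 : α ≤ 1/2 := by
        rw [hα]
        have : U₁ / Lstar ≤ 1/4 := by
          rw [div_le_iff₀ hL]; linarith
        calc Real.sqrt (U₁ / Lstar) ≤ Real.sqrt (1/4) := Real.sqrt_le_sqrt this
          _ = 1/2 := by
              rw [show (1:ℝ)/4 = (1/2)^2 by norm_num, Real.sqrt_sq (by norm_num)]
      have hk := key α hα0 hα2
      have hαsq : α^2 = U₁ / Lstar := Real.sq_sqrt (div_nonneg hU₁ hL.le)
      have e1 : α * Lstar = Real.sqrt (Lstar * U₁) := by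
        rw [← Real.sqrt_sq (mul_nonneg hα0.le hL.le)]
        congr 1
        rw [mul_pow, hαsq]
        field_simp
      have e2 : U₁ / α = Real.sqrt (Lstar * U₁) := by
        rw [← Real.sqrt_sq (div_nonneg hU₁ hα0.le)]
        congr 1
        rw [div_pow, hαsq]
        field_simp
      rw [e1, e2] at hk
      linarith
    · -- Lstar < 4U₁ : use α = 1/2
      have hk := key (1/2) (by norm_num) le_rfl
      have : U₁ / (1/2 : ℝ) = 2 * U₁ := by ring
      rw [this] at hk
      nlinarith
end

section
/- Let ε₁,...,εₙ be independent Rademacher random variables (uniform on {-1,+1}), let W be a finite nonempty set, and suppose for each w ∈ W and each t we have reals η_t ∈ [-B,B] and w_t ∈ [-A,A] (which may depend on the prefix of signs). Then E[max_{w∈W} Σ_{t=1}^n (ε_t η_t w_t − C w_t² − α η_t²)] ≤ min{B²/(2C), A²/(2α)}·log|W| for any C > 0 and α > 0. -/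
/-- The value of a Rademacher sign: `+1` or `-1`. -/
noncomputable def signVal (b : Bool) : ℝ := if b then 1 else -1

/-- A labeling `z : (Fin n → Bool) → Fin n → ℝ` is a tree of depth `n` if the label at
level `t` depends only on the signs `ε₁, …, ε_{t-1}`. -/
def IsTree {n : ℕ} (z : (Fin n → Bool) → Fin n → ℝ) : Prop :=
  ∀ ε ε' : Fin n → Bool, ∀ t : Fin n, (∀ s : Fin n, s < t → ε s = ε' s) → z ε t = z ε' t

open Finset Real

lemma signVal_not (b : Bool) : signVal (!b) = - signVal b := by
  cases b <;> simp [signVal]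

lemma signVal_sq (b : Bool) : signVal b ^ 2 = 1 := by
  cases b <;> simp [signVal]

/-- Scalar exponential-moment bound. -/
lemma exp_add_exp_neg_le (x : ℝ) : Real.exp x + Real.exp (-x) ≤ 2 * Real.exp (x ^ 2 / 2) := by
  have h := Real.cosh_le_exp_half_sq x
  rw [Real.cosh_eq] at h
  linarith

/-- Core backward-induction (martingale-type) bound for a single pair of trees. -/
lemma sum_exp_le {n : ℕ} (C α lam : ℝ) (hlam : 0 < lam)
    (η v : (Fin n → Bool) → Fin n → ℝ)
    (hηtree : IsTree η) (hvtree : IsTree v)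
    (hkey : ∀ ε t, lam / 2 * (η ε t * v ε t) ^ 2 ≤ C * (v ε t) ^ 2 + α * (η ε t) ^ 2) :
    ∑ ε : Fin n → Bool, Real.exp (lam * ∑ t : Fin n, (signVal (ε t) * η ε t * v ε t
        - C * (v ε t) ^ 2 - α * (η ε t) ^ 2)) ≤ 2 ^ n := by
  set term : (Fin n → Bool) → Fin n → ℝ := fun ε t =>
    signVal (ε t) * η ε t * v ε t - C * (v ε t) ^ 2 - α * (η ε t) ^ 2 with hterm
  set S : ℕ → (Fin n → Bool) → ℝ := fun m ε =>
    ∑ t ∈ Finset.univ.filter (fun t : Fin n => (t : ℕ) < m), term ε t with hS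
  have claim : ∀ m : ℕ, ∑ ε : Fin n → Bool, Real.exp (lam * S m ε) ≤ 2 ^ n := by
    intro m
    induction m with
    | zero =>
        have h0 : ∀ ε : Fin n → Bool, S 0 ε = 0 := by
          intro ε; simp [hS]
        simp only [h0, mul_zero, Real.exp_zero]
        rw [Finset.sum_const]
        simp
    | succ m ih =>
        by_cases hm : m < n
        · set t0 : Fin n := ⟨m, hm⟩ with ht0
          set flip : (Fin n → Bool) → (Fin n → Bool) :=
            fun ε => Function.update ε t0 (!ε t0) with hflip
          have hflip_at : ∀ ε, flip ε t0 = !ε t0 := by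
            intro ε; simp [hflip]
          have hflip_ne : ∀ ε (s : Fin n), s ≠ t0 → flip ε s = ε s := by
            intro ε s hs; simp [hflip, Function.update_apply, hs]
          have hinv : Function.Involutive flip := by
            intro ε; funext x
            by_cases hx : x = t0
            · subst hx; simp [hflip]
            · rw [hflip_ne _ _ hx, hflip_ne _ _ hx]
          have hηflip : ∀ ε (s : Fin n), (s : ℕ) ≤ m → η (flip ε) s = η ε s := by
            intro ε s hs
            apply hηtree
            intro s' hs'
            apply hflip_ne
            intro h; rw [h] at hs'
            have : (t0 : ℕ) < (s : ℕ) := hs'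
            simp only [ht0] at this
            omega
          have hvflip : ∀ ε (s : Fin n), (s : ℕ) ≤ m → v (flip ε) s = v ε s := by
            intro ε s hs
            apply hvtree
            intro s' hs'
            apply hflip_ne
            intro h; rw [h] at hs'
            have : (t0 : ℕ) < (s : ℕ) := hs'
            simp only [ht0] at this
            omega
          have hSsucc : ∀ ε, S (m + 1) ε = S m ε + term ε t0 := by
            intro ε
            have hfil : Finset.univ.filter (fun t : Fin n => (t : ℕ) < m + 1)
                = insert t0 (Finset.univ.filter (fun t : Fin n => (t : ℕ) < m)) := by
              ext s
              simp only [Finset.mem_filter, Finset.mem_univ, true_and, Finset.mem_insert,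
                Fin.ext_iff, ht0]
              omega
            have ht0nm : t0 ∉ Finset.univ.filter (fun t : Fin n => (t : ℕ) < m) := by
              simp [ht0]
            rw [hS]
            simp only
            rw [hfil, Finset.sum_insert ht0nm]
            ring
          have hSflip : ∀ ε, S m (flip ε) = S m ε := by
            intro ε
            apply Finset.sum_congr rfl
            intro s hs
            have hs' : (s : ℕ) < m := by simpa using hs
            have hne : s ≠ t0 := by
              intro h; rw [h] at hs'; simp [ht0] at hs'
            rw [hterm]
            simp only
            rw [hflip_ne ε s hne, hηflip ε s hs'.le, hvflip ε s hs'.le]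
          have pair : ∀ ε, Real.exp (lam * S (m + 1) ε) + Real.exp (lam * S (m + 1) (flip ε))
              ≤ 2 * Real.exp (lam * S m ε) := by
            intro ε
            have h1 : S (m + 1) ε = S m ε + term ε t0 := hSsucc ε
            have h2 : S (m + 1) (flip ε) = S m ε + term (flip ε) t0 := by
              rw [hSsucc, hSflip]
            set a : ℝ := lam * (signVal (ε t0) * η ε t0 * v ε t0) with ha
            set c : ℝ := C * (v ε t0) ^ 2 + α * (η ε t0) ^ 2 with hc
            have hterm1 : term ε t0 = signVal (ε t0) * η ε t0 * v ε t0 - c := by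
              rw [hterm, hc]; ring
            have hterm2 : term (flip ε) t0 = -(signVal (ε t0) * η ε t0 * v ε t0) - c := by
              rw [hterm]
              simp only
              rw [hflip_at, signVal_not, hηflip ε t0 le_rfl, hvflip ε t0 le_rfl, hc]
              ring
            rw [h1, h2, hterm1, hterm2]
            have e1 : lam * (S m ε + (signVal (ε t0) * η ε t0 * v ε t0 - c))
                = (lam * S m ε - lam * c) + a := by rw [ha]; ring
            have e2 : lam * (S m ε + (-(signVal (ε t0) * η ε t0 * v ε t0) - c))
                = (lam * S m ε - lam * c) + (-a) := by rw [ha]; ring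
            rw [e1, e2, Real.exp_add, Real.exp_add, ← mul_add]
            have hcosh := exp_add_exp_neg_le a
            have hquad : a ^ 2 / 2 ≤ lam * c := by
              have hk := hkey ε t0
              have hasq : a ^ 2 = lam ^ 2 * (signVal (ε t0) ^ 2 * (η ε t0 * v ε t0) ^ 2) := by
                rw [ha]; ring
              rw [hasq, signVal_sq, one_mul]
              calc lam ^ 2 * (η ε t0 * v ε t0) ^ 2 / 2
                  = lam * (lam / 2 * (η ε t0 * v ε t0) ^ 2) := by ring
                _ ≤ lam * c := mul_le_mul_of_nonneg_left hk hlam.le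
            calc Real.exp (lam * S m ε - lam * c) * (Real.exp a + Real.exp (-a))
                ≤ Real.exp (lam * S m ε - lam * c) * (2 * Real.exp (a ^ 2 / 2)) :=
                  mul_le_mul_of_nonneg_left hcosh (Real.exp_nonneg _)
              _ = 2 * Real.exp (lam * S m ε - lam * c + a ^ 2 / 2) := by
                  rw [Real.exp_add]; ring
              _ ≤ 2 * Real.exp (lam * S m ε) := by
                  have hle : lam * S m ε - lam * c + a ^ 2 / 2 ≤ lam * S m ε := by linarith
                  have := Real.exp_le_exp.mpr hle
                  linarith
          have hdouble : 2 * ∑ ε : Fin n → Bool, Real.exp (lam * S (m + 1) ε)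
              = ∑ ε : Fin n → Bool,
                  (Real.exp (lam * S (m + 1) ε) + Real.exp (lam * S (m + 1) (flip ε))) := by
            rw [Finset.sum_add_distrib]
            have hsum : ∑ ε : Fin n → Bool, Real.exp (lam * S (m + 1) (flip ε))
                = ∑ ε : Fin n → Bool, Real.exp (lam * S (m + 1) ε) :=
              Fintype.sum_equiv hinv.toPerm _ _ (fun ε => rfl)
            rw [hsum]; ring
          have hsumpair : ∑ ε : Fin n → Bool,
              (Real.exp (lam * S (m + 1) ε) + Real.exp (lam * S (m + 1) (flip ε)))
              ≤ ∑ ε : Fin n → Bool, 2 * Real.exp (lam * S m ε) :=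
            Finset.sum_le_sum (fun ε _ => pair ε)
          have h2pow : ∑ ε : Fin n → Bool, 2 * Real.exp (lam * S m ε) ≤ 2 * 2 ^ n := by
            rw [← Finset.mul_sum]
            linarith
          linarith [hdouble, hsumpair, h2pow]
        · have heq : ∀ ε, S (m + 1) ε = S m ε := by
            intro ε
            apply Finset.sum_congr _ (fun _ _ => rfl)
            apply Finset.filter_congr
            intro t _
            have : (t : ℕ) < n := t.isLt
            omega
          simp only [heq]
          exact ih
  have hfull : ∀ ε, S n ε = ∑ t : Fin n, term ε t := by
    intro ε
    rw [hS]
    simp only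
    rw [Finset.filter_true_of_mem (fun t _ => t.isLt)]
  calc ∑ ε : Fin n → Bool, Real.exp (lam * ∑ t : Fin n, (signVal (ε t) * η ε t * v ε t
          - C * (v ε t) ^ 2 - α * (η ε t) ^ 2))
      = ∑ ε : Fin n → Bool, Real.exp (lam * S n ε) := by
        refine Finset.sum_congr rfl fun ε _ => ?_
        rw [hfull ε]
    _ ≤ 2 ^ n := claim n

/-- The averaged-sup bound for a single exponent `lam`, with abstract payoff `F`. -/
lemma avg_sup_le {n : ℕ} {W : Type*} [Fintype W] [Nonempty W]
    (lam : ℝ) (hlam : 0 < lam) (F : (Fin n → Bool) → W → ℝ)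
    (hb : ∀ i : W, ∑ ε : Fin n → Bool, Real.exp (lam * F ε i) ≤ 2 ^ n) :
    (1 / 2 ^ n : ℝ) * ∑ ε : Fin n → Bool,
        (Finset.univ.sup' Finset.univ_nonempty (F ε))
      ≤ Real.log (Fintype.card W) / lam := by
  have hPpos : ∀ ε : Fin n → Bool, 0 < ∑ i : W, Real.exp (lam * F ε i) := fun ε =>
    Finset.sum_pos (fun i _ => Real.exp_pos _) Finset.univ_nonempty
  have step1 : ∀ ε : Fin n → Bool, Finset.univ.sup' Finset.univ_nonempty (F ε)
      ≤ Real.log (∑ i : W, Real.exp (lam * F ε i)) / lam := by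
    intro ε
    obtain ⟨i0, -, hi0⟩ := Finset.exists_mem_eq_sup' Finset.univ_nonempty (F ε)
    rw [hi0]
    have hle : Real.exp (lam * F ε i0) ≤ ∑ i : W, Real.exp (lam * F ε i) :=
      Finset.single_le_sum (f := fun i => Real.exp (lam * F ε i)) (fun i _ => (Real.exp_pos _).le) (Finset.mem_univ i0)
    have hlog : lam * F ε i0 ≤ Real.log (∑ i : W, Real.exp (lam * F ε i)) :=
      (Real.le_log_iff_exp_le (hPpos ε)).mpr hle
    rw [le_div_iff₀ hlam]
    linarith [hlog, mul_comm lam (F ε i0)]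
  have card2 : (Fintype.card (Fin n → Bool) : ℝ) = 2 ^ n := by
    simp [Fintype.card_fun]
  have hw : ∑ _ε : Fin n → Bool, (1 / 2 ^ n : ℝ) = 1 := by
    rw [Finset.sum_const, nsmul_eq_mul]
    rw [← Fintype.card, card2]
    field_simp
  have step2 : ∑ ε : Fin n → Bool, (1 / 2 ^ n : ℝ) * Real.log (∑ i : W, Real.exp (lam * F ε i))
      ≤ Real.log (∑ ε : Fin n → Bool, (1 / 2 ^ n : ℝ) * ∑ i : W, Real.exp (lam * F ε i)) := by
    have := strictConcaveOn_log_Ioi.concaveOn.le_map_sum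
      (t := (Finset.univ : Finset (Fin n → Bool)))
      (w := fun _ => (1 / 2 ^ n : ℝ)) (p := fun ε => ∑ i : W, Real.exp (lam * F ε i))
      (fun _ _ => by positivity) hw (fun ε _ => hPpos ε)
    simpa [smul_eq_mul] using this
  have step3 : ∑ ε : Fin n → Bool, (1 / 2 ^ n : ℝ) * ∑ i : W, Real.exp (lam * F ε i)
      ≤ Fintype.card W := by
    calc ∑ ε : Fin n → Bool, (1 / 2 ^ n : ℝ) * ∑ i : W, Real.exp (lam * F ε i)
        = ∑ i : W, (1 / 2 ^ n : ℝ) * ∑ ε : Fin n → Bool, Real.exp (lam * F ε i) := by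
          simp_rw [Finset.mul_sum]
          rw [Finset.sum_comm]
      _ ≤ ∑ _i : W, (1 : ℝ) := by
          apply Finset.sum_le_sum
          intro i _
          have h2n : (0 : ℝ) < 2 ^ n := by positivity
          rw [div_mul_eq_mul_div, one_mul, div_le_one h2n]
          exact hb i
      _ = Fintype.card W := by simp
  have hPavgpos : 0 < ∑ ε : Fin n → Bool, (1 / 2 ^ n : ℝ) * ∑ i : W, Real.exp (lam * F ε i) :=
    Finset.sum_pos (fun ε _ => by positivity) Finset.univ_nonempty
  calc (1 / 2 ^ n : ℝ) * ∑ ε : Fin n → Bool,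
        (Finset.univ.sup' Finset.univ_nonempty (F ε))
      ≤ (1 / 2 ^ n : ℝ) * ∑ ε : Fin n → Bool,
          Real.log (∑ i : W, Real.exp (lam * F ε i)) / lam := by
        apply mul_le_mul_of_nonneg_left _ (by positivity)
        exact Finset.sum_le_sum (fun ε _ => step1 ε)
    _ = (∑ ε : Fin n → Bool, (1 / 2 ^ n : ℝ)
          * Real.log (∑ i : W, Real.exp (lam * F ε i))) / lam := by
        rw [Finset.mul_sum, Finset.sum_div]
        congr 1
        funext ε
        ring
    _ ≤ Real.log (∑ ε : Fin n → Bool, (1 / 2 ^ n : ℝ) * ∑ i : W, Real.exp (lam * F ε i)) / lam :=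
        div_le_div_of_nonneg_right step2 hlam.le
    _ ≤ Real.log (Fintype.card W) / lam := by
        apply div_le_div_of_nonneg_right _ hlam.le
        exact Real.log_le_log hPavgpos step3

theorem finite_class_offset_lemma
    {n : ℕ} {W : Type*} [Fintype W] [Nonempty W]
    (A B C α : ℝ) (hA : 0 < A) (hB : 0 < B) (hC : 0 < C) (hα : 0 < α)
    (η : (Fin n → Bool) → Fin n → ℝ) (hηtree : IsTree η)
    (hηbd : ∀ ε t, |η ε t| ≤ B)
    (w : W → (Fin n → Bool) → Fin n → ℝ) (hwtree : ∀ i, IsTree (w i))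
    (hwbd : ∀ i ε t, |w i ε t| ≤ A) :
    (1 / 2 ^ n : ℝ) * ∑ ε : Fin n → Bool,
        (Finset.univ.sup' Finset.univ_nonempty (fun i : W =>
          ∑ t : Fin n, (signVal (ε t) * η ε t * w i ε t
              - C * (w i ε t)^2 - α * (η ε t)^2)))
      ≤ min (B^2 / (2 * C)) (A^2 / (2 * α)) * Real.log (Fintype.card W) := by
  have hcard : (1 : ℝ) ≤ Fintype.card W := by exact_mod_cast Fintype.card_pos
  have hlog : 0 ≤ Real.log (Fintype.card W) := Real.log_nonneg hcard
  rw [min_mul_of_nonneg _ _ hlog]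
  apply le_min
  · have hlam : (0 : ℝ) < 2 * C / B ^ 2 := by positivity
    have hkey : ∀ i ε t, (2 * C / B ^ 2) / 2 * (η ε t * w i ε t) ^ 2
        ≤ C * (w i ε t) ^ 2 + α * (η ε t) ^ 2 := by
      intro i ε t
      have hab := abs_le.mp (hηbd ε t)
      have hsq : (η ε t) ^ 2 ≤ B ^ 2 := sq_le_sq' hab.1 hab.2
      have h1 : (2 * C / B ^ 2) / 2 * (η ε t * w i ε t) ^ 2
          = C * ((η ε t) ^ 2 * (w i ε t) ^ 2) / B ^ 2 := by
        field_simp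
      have h2 : C * ((η ε t) ^ 2 * (w i ε t) ^ 2) / B ^ 2
          ≤ C * (B ^ 2 * (w i ε t) ^ 2) / B ^ 2 := by
        gcongr
      have h3 : C * (B ^ 2 * (w i ε t) ^ 2) / B ^ 2 = C * (w i ε t) ^ 2 := by
        field_simp
      have h4 : 0 ≤ α * (η ε t) ^ 2 := by positivity
      rw [h1]
      linarith
    have := avg_sup_le (2 * C / B ^ 2) hlam
      (fun (ε : Fin n → Bool) (i : W) => ∑ t : Fin n, (signVal (ε t) * η ε t * w i ε t
          - C * (w i ε t)^2 - α * (η ε t)^2))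
      (fun i => sum_exp_le C α (2 * C / B ^ 2) hlam η (w i) hηtree (hwtree i) (hkey i))
    have hEq : Real.log (Fintype.card W) / (2 * C / B ^ 2)
        = B ^ 2 / (2 * C) * Real.log (Fintype.card W) := by
      field_simp
    linarith [this, hEq.le, hEq.ge]
  · have hlam : (0 : ℝ) < 2 * α / A ^ 2 := by positivity
    have hkey : ∀ i ε t, (2 * α / A ^ 2) / 2 * (η ε t * w i ε t) ^ 2
        ≤ C * (w i ε t) ^ 2 + α * (η ε t) ^ 2 := by
      intro i ε t
      have hab := abs_le.mp (hwbd i ε t)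
      have hsq : (w i ε t) ^ 2 ≤ A ^ 2 := sq_le_sq' hab.1 hab.2
      have h1 : (2 * α / A ^ 2) / 2 * (η ε t * w i ε t) ^ 2
          = α * ((w i ε t) ^ 2 * (η ε t) ^ 2) / A ^ 2 := by
        field_simp
      have h2 : α * ((w i ε t) ^ 2 * (η ε t) ^ 2) / A ^ 2
          ≤ α * (A ^ 2 * (η ε t) ^ 2) / A ^ 2 := by
        gcongr
      have h3 : α * (A ^ 2 * (η ε t) ^ 2) / A ^ 2 = α * (η ε t) ^ 2 := by
        field_simp
      have h4 : 0 ≤ C * (w i ε t) ^ 2 := by positivity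
      rw [h1]
      linarith
    have := avg_sup_le (2 * α / A ^ 2) hlam
      (fun (ε : Fin n → Bool) (i : W) => ∑ t : Fin n, (signVal (ε t) * η ε t * w i ε t
          - C * (w i ε t)^2 - α * (η ε t)^2))
      (fun i => sum_exp_le C α (2 * α / A ^ 2) hlam η (w i) hηtree (hwtree i) (hkey i))
    have hEq : Real.log (Fintype.card W) / (2 * α / A ^ 2)
        = A ^ 2 / (2 * α) * Real.log (Fintype.card W) := by
      field_simp
    linarith [this, hEq.le, hEq.ge]
end

section
/- Let W be a finite nonempty set of [-A,A]-valued trees of depth n and let η be a [-B,B]-valued tree of depth n. Then E_ε[max_{w∈W} Σ_{t=1}^n ε_t η_t(ε) w_t(ε)] ≤ B · √(2 log|W| · max_{w∈W, ε} Σ_{t=1}^n w_t(ε)²), where ε = (ε₁,...,εₙ) are i.i.d. Rademacher signs and tree labels at level t depend on ε₁,...,ε_{t-1}. -/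
/-!
For a tree `a` the process `exp (∑ ε_t a_t - a_t² / 2)` is a supermartingale along the sign
sequence, because `cosh c ≤ exp (c² / 2)`. Applied to `λ η w` this shows that each `w ∈ W` has a
sub-Gaussian moment generating function with variance proxy `B² M`, where `M` bounds the quadratic
variation `∑_t w_t²`. Jensen's inequality and `exp (λ max) ≤ ∑ exp` then give
`λ E max ≤ log |W| + λ² B² M / 2` for every `λ > 0`, and optimising over `λ` yields the bound.
-/

open Real Finset

theorem Real.le_sqrt_of_forall_mul_le {v L K : ℝ} (hK : 0 ≤ K)
    (h : ∀ l > 0, l * v ≤ L + l ^ 2 * K / 2) : v ≤ √(2 * L * K) := by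
  rcases le_or_gt v 0 with hv | hv
  · exact hv.trans (sqrt_nonneg _)
  refine le_sqrt_of_sq_le ?_
  rcases hK.eq_or_lt with rfl | hK
  · have := h ((|L| + 1) / v) (by positivity)
    rw [div_mul_cancel₀ _ hv.ne', mul_zero, zero_div, add_zero] at this
    linarith [le_abs_self L]
  · have := h (v / K) (by positivity)
    field_simp at this
    nlinarith

theorem Real.exp_average_le_average_exp {Ω : Type*} [Fintype Ω] [Nonempty Ω] (f : Ω → ℝ) :
    exp ((1 / Fintype.card Ω : ℝ) * ∑ ω, f ω) ≤ (1 / Fintype.card Ω : ℝ) * ∑ ω, exp (f ω) := by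
  have := convexOn_exp.map_sum_le (t := univ) (w := fun _ => (1 / Fintype.card Ω : ℝ)) (p := f)
    (fun _ _ => by positivity) (by simp [card_univ]) (fun _ _ => Set.mem_univ _)
  simpa [smul_eq_mul, mul_sum] using this

theorem Real.exp_mul_sup'_le_sum_exp {ι : Type*} {s : Finset ι} (hs : s.Nonempty) (f : ι → ℝ)
    (l : ℝ) : exp (l * s.sup' hs f) ≤ ∑ i ∈ s, exp (l * f i) := by
  obtain ⟨i, hi, hmax⟩ := exists_mem_eq_sup' hs f
  rw [hmax]
  exact single_le_sum (f := fun i => exp (l * f i)) (fun _ _ => (exp_pos _).le) hi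

theorem average_sup'_le_sqrt_of_sum_exp_le {Ω W : Type*} [Fintype Ω] [Nonempty Ω] [Fintype W]
    [Nonempty W] (X : W → Ω → ℝ) {K : ℝ} (hK : 0 ≤ K)
    (hmgf : ∀ l > 0, ∀ i, ∑ ω, exp (l * X i ω) ≤ Fintype.card Ω * exp (l ^ 2 * K / 2)) :
    (1 / Fintype.card Ω : ℝ) * ∑ ω, univ.sup' univ_nonempty (fun i => X i ω)
      ≤ √(2 * log (Fintype.card W) * K) := by
  have hΩ : (0 : ℝ) < Fintype.card Ω := by exact_mod_cast Fintype.card_pos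
  have hW : (0 : ℝ) < Fintype.card W := by exact_mod_cast Fintype.card_pos
  refine le_sqrt_of_forall_mul_le hK fun l hl => ?_
  rw [← exp_le_exp, exp_add, exp_log hW, mul_left_comm, mul_sum]
  calc exp ((1 / Fintype.card Ω : ℝ) * ∑ ω, l * univ.sup' univ_nonempty (fun i => X i ω))
      ≤ (1 / Fintype.card Ω : ℝ) * ∑ ω, exp (l * univ.sup' univ_nonempty (fun i => X i ω)) :=
        exp_average_le_average_exp _
    _ ≤ (1 / Fintype.card Ω : ℝ) * ∑ ω, ∑ i, exp (l * X i ω) := by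
        gcongr with ω
        exact exp_mul_sup'_le_sum_exp _ _ _
    _ = ∑ i, (1 / Fintype.card Ω : ℝ) * ∑ ω, exp (l * X i ω) := by
        rw [sum_comm, mul_sum]
    _ ≤ ∑ _i : W, exp (l ^ 2 * K / 2) := by
        gcongr with i
        rw [div_mul_eq_mul_div, one_mul, div_le_iff₀' hΩ]
        exact hmgf l hl i
    _ = Fintype.card W * exp (l ^ 2 * K / 2) := by simp

section Trees

variable {n : ℕ}

theorem IsTree.apply_zero_eq {a : (Fin (n + 1) → Bool) → Fin (n + 1) → ℝ} (ha : IsTree a)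
    (ε ε' : Fin (n + 1) → Bool) : a ε 0 = a ε' 0 :=
  ha ε ε' 0 fun s hs => absurd hs (Fin.not_lt_zero s)

theorem IsTree.subtree {a : (Fin (n + 1) → Bool) → Fin (n + 1) → ℝ} (ha : IsTree a) (b : Bool) :
    IsTree fun (ε : Fin n → Bool) (t : Fin n) => a (Fin.cons b ε) t.succ := by
  intro ε ε' t h
  refine ha _ _ _ fun s => Fin.cases (fun _ => rfl) (fun r hr => ?_) s
  simpa using h r (Fin.succ_lt_succ_iff.mp hr)

theorem IsTree.mul {a b : (Fin n → Bool) → Fin n → ℝ} (ha : IsTree a) (hb : IsTree b) :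
    IsTree fun ε t => a ε t * b ε t :=
  fun ε ε' t h => congrArg₂ (· * ·) (ha ε ε' t h) (hb ε ε' t h)

theorem IsTree.const_mul {a : (Fin n → Bool) → Fin n → ℝ} (ha : IsTree a) (l : ℝ) :
    IsTree fun ε t => l * a ε t := fun ε ε' t h => congrArg (l * ·) (ha ε ε' t h)

theorem sum_bool_exp_signVal_mul_sub_sq_le (c : ℝ) :
    ∑ b : Bool, exp (signVal b * c - c ^ 2 / 2) ≤ 2 := by
  have hcosh : exp (c - c ^ 2 / 2) + exp (-c - c ^ 2 / 2) = 2 * cosh c * exp (-(c ^ 2 / 2)) := by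
    rw [cosh_eq, sub_eq_add_neg, sub_eq_add_neg, exp_add, exp_add]
    ring
  calc ∑ b : Bool, exp (signVal b * c - c ^ 2 / 2)
      = 2 * cosh c * exp (-(c ^ 2 / 2)) := by simp [signVal, ← hcosh]
    _ ≤ 2 * exp (c ^ 2 / 2) * exp (-(c ^ 2 / 2)) := by gcongr; exact cosh_le_exp_half_sq c
    _ = 2 := by rw [mul_assoc, ← exp_add, add_neg_cancel, exp_zero, mul_one]

theorem IsTree.sum_exp_sum_signVal_mul_sub_sq_le {a : (Fin n → Bool) → Fin n → ℝ}
    (ha : IsTree a) :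
    ∑ ε : Fin n → Bool, exp (∑ t, (signVal (ε t) * a ε t - a ε t ^ 2 / 2)) ≤ 2 ^ n := by
  induction n with
  | zero => simp
  | succ n ih =>
    set c := a (fun _ => true) 0
    have hroot : ∀ ε, a ε 0 = c := fun ε => ha.apply_zero_eq ε _
    calc ∑ ε : Fin (n + 1) → Bool, exp (∑ t, (signVal (ε t) * a ε t - a ε t ^ 2 / 2))
        = ∑ b : Bool, exp (signVal b * c - c ^ 2 / 2) * ∑ ε : Fin n → Bool,
            exp (∑ t : Fin n, (signVal (ε t) * a (Fin.cons b ε) t.succ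
              - a (Fin.cons b ε) t.succ ^ 2 / 2)) := by
          rw [← (Fin.consEquiv fun _ => Bool).sum_comp, Fintype.sum_prod_type]
          refine sum_congr rfl fun b _ => ?_
          rw [mul_sum]
          refine sum_congr rfl fun ε _ => ?_
          rw [← exp_add]
          simp only [Fin.consEquiv, Equiv.coe_fn_mk, Fin.sum_univ_succ, Fin.cons_zero,
            Fin.cons_succ, hroot]
      _ ≤ ∑ b : Bool, exp (signVal b * c - c ^ 2 / 2) * 2 ^ n := by
          gcongr with b
          exact ih (ha.subtree b)
      _ ≤ 2 * 2 ^ n := by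
          rw [← sum_mul]
          gcongr
          exact sum_bool_exp_signVal_mul_sub_sq_le c
      _ = 2 ^ (n + 1) := by ring

theorem IsTree.sum_exp_mul_sum_signVal_mul_le {a : (Fin n → Bool) → Fin n → ℝ} (ha : IsTree a)
    {K : ℝ} (hK : ∀ ε, ∑ t, a ε t ^ 2 ≤ K) (l : ℝ) :
    ∑ ε : Fin n → Bool, exp (l * ∑ t, signVal (ε t) * a ε t) ≤ 2 ^ n * exp (l ^ 2 * K / 2) := by
  have hpointwise : ∀ ε : Fin n → Bool, exp (l * ∑ t, signVal (ε t) * a ε t) ≤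
      exp (l ^ 2 * K / 2) * exp (∑ t, (signVal (ε t) * (l * a ε t) - (l * a ε t) ^ 2 / 2)) := by
    intro ε
    have hsplit : ∑ t, (signVal (ε t) * (l * a ε t) - (l * a ε t) ^ 2 / 2)
        = l * ∑ t, signVal (ε t) * a ε t - l ^ 2 / 2 * ∑ t, a ε t ^ 2 := by
      rw [sum_sub_distrib, mul_sum, mul_sum]
      congr 1 <;> exact sum_congr rfl fun t _ => by ring
    rw [← exp_add, exp_le_exp, hsplit]
    nlinarith [hK ε, sq_nonneg l]
  calc ∑ ε : Fin n → Bool, exp (l * ∑ t, signVal (ε t) * a ε t)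
      ≤ ∑ ε : Fin n → Bool, exp (l ^ 2 * K / 2) *
          exp (∑ t, (signVal (ε t) * (l * a ε t) - (l * a ε t) ^ 2 / 2)) :=
        sum_le_sum fun ε _ => hpointwise ε
    _ ≤ exp (l ^ 2 * K / 2) * 2 ^ n := by
        rw [← mul_sum]
        gcongr
        exact (ha.const_mul l).sum_exp_sum_signVal_mul_sub_sq_le
    _ = 2 ^ n * exp (l ^ 2 * K / 2) := mul_comm _ _

end Trees

theorem sum_sq_mul_le_sq_mul_sum_sq {ι : Type*} (s : Finset ι) {x y : ι → ℝ} {B : ℝ}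
    (hx : ∀ i ∈ s, |x i| ≤ B) : ∑ i ∈ s, (x i * y i) ^ 2 ≤ B ^ 2 * ∑ i ∈ s, y i ^ 2 := by
  rw [mul_sum]
  refine sum_le_sum fun i hi => ?_
  rw [mul_pow]
  refine mul_le_mul_of_nonneg_right ?_ (sq_nonneg _)
  exact sq_le_sq' (neg_le_of_abs_le (hx i hi)) (le_of_abs_le (hx i hi))

theorem finite_class_maximal_inequality_general
    {n : ℕ} {W : Type*} [Fintype W] [Nonempty W]
    (B : ℝ) (hB : 0 < B)
    (η : (Fin n → Bool) → Fin n → ℝ) (hηtree : IsTree η)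
    (hηbd : ∀ ε t, |η ε t| ≤ B)
    (w : W → (Fin n → Bool) → Fin n → ℝ) (hwtree : ∀ i, IsTree (w i)) :
    (1 / 2 ^ n : ℝ) * ∑ ε : Fin n → Bool,
        (Finset.univ.sup' Finset.univ_nonempty (fun i : W =>
          ∑ t : Fin n, signVal (ε t) * η ε t * w i ε t))
      ≤ B * Real.sqrt (2 * Real.log (Fintype.card W) *
          Finset.univ.sup' Finset.univ_nonempty
            (fun p : W × (Fin n → Bool) => ∑ t : Fin n, (w p.1 p.2 t)^2)) := by
  set M := univ.sup' univ_nonempty fun p : W × (Fin n → Bool) => ∑ t, w p.1 p.2 t ^ 2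
  have hM : ∀ i ε, ∑ t, w i ε t ^ 2 ≤ M := fun i ε =>
    le_sup' (fun p : W × (Fin n → Bool) => ∑ t, w p.1 p.2 t ^ 2) (mem_univ (i, ε))
  have hM0 : 0 ≤ M := (sum_nonneg fun t _ => sq_nonneg _).trans
    (hM (Classical.arbitrary W) fun _ => true)
  have hcard : (Fintype.card (Fin n → Bool) : ℝ) = 2 ^ n := by simp
  have hmgf : ∀ l > 0, ∀ i, ∑ ε : Fin n → Bool, exp (l * ∑ t, signVal (ε t) * η ε t * w i ε t)
      ≤ Fintype.card (Fin n → Bool) * exp (l ^ 2 * (B ^ 2 * M) / 2) := fun l _ i => by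
    simp only [hcard, mul_assoc]
    exact (hηtree.mul (hwtree i)).sum_exp_mul_sum_signVal_mul_le (fun ε =>
      (sum_sq_mul_le_sq_mul_sum_sq univ fun t _ => hηbd ε t).trans (by gcongr; exact hM i ε)) l
  have hmax := average_sup'_le_sqrt_of_sum_exp_le _ (by positivity) hmgf
  rwa [hcard, show 2 * log (Fintype.card W) * (B ^ 2 * M) = B ^ 2 * (2 * log (Fintype.card W) * M)
    by ring, sqrt_mul (sq_nonneg B), sqrt_sq hB.le] at hmax

theorem finite_class_maximal_inequality
    {n : ℕ} {W : Type*} [Fintype W] [Nonempty W]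
    (A B : ℝ) (hA : 0 < A) (hB : 0 < B)
    (η : (Fin n → Bool) → Fin n → ℝ) (hηtree : IsTree η)
    (hηbd : ∀ ε t, |η ε t| ≤ B)
    (w : W → (Fin n → Bool) → Fin n → ℝ) (hwtree : ∀ i, IsTree (w i))
    (hwbd : ∀ i ε t, |w i ε t| ≤ A) :
    (1 / 2 ^ n : ℝ) * ∑ ε : Fin n → Bool,
        (Finset.univ.sup' Finset.univ_nonempty (fun i : W =>
          ∑ t : Fin n, signVal (ε t) * η ε t * w i ε t))
      ≤ B * Real.sqrt (2 * Real.log (Fintype.card W) *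
          Finset.univ.sup' Finset.univ_nonempty
            (fun p : W × (Fin n → Bool) => ∑ t : Fin n, (w p.1 p.2 t)^2)) :=
  finite_class_maximal_inequality_general B hB η hηtree hηbd w hwtree
end

section
/- Let ε₁,...,ε_k be independent Rademacher random variables. Then E|Σ_{j=1}^k ε_j| ≥ √(k/2). -/
open Finset

def Skh (k : ℕ) (ε : Fin k → Bool) : ℤ := ∑ j : Fin k, (if ε j then (1:ℤ) else -1)

noncomputable def Akh (k : ℕ) : ℝ :=
  ∑ ε : Fin k → Bool, |∑ j : Fin k, (if ε j then (1:ℝ) else -1)|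

noncomputable def Zkh (k : ℕ) : ℝ :=
  ∑ ε : Fin k → Bool, (if Skh k ε = 0 then 1 else 0)

lemma abs_real_eq (k : ℕ) (ε : Fin k → Bool) :
    |∑ j : Fin k, (if ε j then (1:ℝ) else -1)| = |((Skh k ε : ℤ) : ℝ)| := by
  congr 1
  rw [Skh]
  push_cast
  rfl

lemma Skh_cons (k : ℕ) (b : Bool) (ε : Fin k → Bool) :
    Skh (k+1) (Fin.cons b ε) = (if b then 1 else -1) + Skh k ε := by
  simp [Skh, Fin.sum_univ_succ]

lemma key_abs (s : ℤ) : |s + 1| + |s - 1| = 2 * |s| + (if s = 0 then 2 else 0) := by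
  have h1 : |s + 1| = ((s+1).natAbs : ℤ) := (Int.abs_eq_natAbs _)
  have h2 : |s - 1| = ((s-1).natAbs : ℤ) := (Int.abs_eq_natAbs _)
  have h3 : |s| = (s.natAbs : ℤ) := (Int.abs_eq_natAbs _)
  rw [h1,h2,h3]
  rcases eq_or_ne s 0 with h | h <;> simp only [h, if_true, if_false] <;> push_cast <;> omega

lemma Akh_succ (k : ℕ) : Akh (k+1) = 2 * Akh k + 2 * Zkh k := by
  rw [Akh, ← Equiv.sum_comp (Fin.consEquiv (fun _ : Fin (k+1) => Bool))]
  rw [Fintype.sum_prod_type]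
  have step : ∀ (b : Bool) (ε : Fin k → Bool),
      |∑ j : Fin (k+1), (if (Fin.consEquiv (fun _ : Fin (k+1) => Bool)) (b, ε) j then (1:ℝ) else -1)|
      = |(((if b then 1 else -1) + Skh k ε : ℤ) : ℝ)| := by
    intro b ε
    rw [abs_real_eq]
    have : (Fin.consEquiv fun _ : Fin (k+1) => Bool) (b, ε) = Fin.cons b ε := rfl
    rw [this, Skh_cons]
  rw [Fintype.sum_congr _ _ (fun b => Fintype.sum_congr _ _ (step b))]
  rw [Fintype.sum_bool, ← Finset.sum_add_distrib]
  have eq2 : ∀ ε : Fin k → Bool,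
      |(((if (true:Bool) then 1 else -1) + Skh k ε : ℤ) : ℝ)|
        + |(((if (false:Bool) then 1 else -1) + Skh k ε : ℤ) : ℝ)|
      = 2 * |∑ j : Fin k, (if ε j then (1:ℝ) else -1)|
        + 2 * (if Skh k ε = 0 then (1:ℝ) else 0) := by
    intro ε
    rw [abs_real_eq, if_pos rfl, if_neg (by decide : ¬ (false = true))]
    rcases eq_or_ne (Skh k ε) 0 with h0 | h0
    · simp only [h0, if_pos rfl]
      norm_num
    · have h := key_abs (Skh k ε)
      rw [if_neg h0] at h
      have h2 : |Skh k ε + 1| + |Skh k ε - 1| = 2 * |Skh k ε| := by linarith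
      rw [if_neg h0, mul_zero, add_zero]
      push_cast
      rw [show ((1:ℝ) + (Skh k ε:ℝ)) = (Skh k ε:ℝ) + 1 by ring,
          show ((-1:ℝ) + (Skh k ε:ℝ)) = (Skh k ε:ℝ) - 1 by ring]
      exact_mod_cast congrArg (fun z : ℤ => (z:ℝ)) h2
  rw [Finset.sum_congr rfl (fun ε _ => eq2 ε), Finset.sum_add_distrib,
    ← Finset.mul_sum, ← Finset.mul_sum]
  rfl

lemma Skh_eq (k : ℕ) (ε : Fin k → Bool) :
    Skh k ε = 2 * ((univ.filter fun i => ε i = true).card : ℤ) - k := by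
  have : ∀ j : Fin k, (if ε j then (1:ℤ) else -1) = 2 * (if ε j = true then (1:ℤ) else 0) - 1 := by
    intro j; by_cases h : ε j <;> simp [h]
  rw [Skh, Finset.sum_congr rfl (fun j _ => this j), Finset.sum_sub_distrib,
    ← Finset.mul_sum, Finset.sum_boole, Finset.sum_const, Finset.card_univ]
  simp

lemma Zkh_odd (m : ℕ) : Zkh (2*m+1) = 0 := by
  rw [Zkh]
  apply Finset.sum_eq_zero
  intro ε _
  rw [if_neg]
  rw [Skh_eq]
  push_cast
  omega

lemma Zkh_even (m : ℕ) : Zkh (2*m) = Nat.centralBinom m := by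
  rw [Zkh]
  have : ∀ ε : Fin (2*m) → Bool, (Skh (2*m) ε = 0) ↔ ((univ.filter fun i => ε i = true).card = m) := by
    intro ε
    rw [Skh_eq]
    push_cast
    omega
  rw [Finset.sum_congr rfl (fun ε _ => by rw [if_congr (this ε) rfl rfl]), Finset.sum_boole]
  norm_num
  have hb : (univ.filter (fun ε : Fin (2*m) → Bool => (univ.filter fun i => ε i = true).card = m)).card
      = (Finset.powersetCard m (univ : Finset (Fin (2*m)))).card := by
    apply Finset.card_bij (fun ε _ => univ.filter fun i => ε i = true)
    · intro ε hε
      rw [Finset.mem_powersetCard]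
      exact ⟨Finset.subset_univ _, (Finset.mem_filter.1 hε).2⟩
    · intro ε1 h1 ε2 h2 h
      funext i
      have := Finset.ext_iff.1 h i
      simp only [Finset.mem_filter, Finset.mem_univ, true_and] at this
      by_cases h' : ε1 i <;> by_cases h'' : ε2 i <;> simp_all
    · intro s hs
      rw [Finset.mem_powersetCard] at hs
      refine ⟨fun i => i ∈ s, ?_, ?_⟩
      · rw [Finset.mem_filter]
        refine ⟨Finset.mem_univ _, ?_⟩
        have he : (univ.filter fun i : Fin (2*m) => decide (i ∈ s) = true) = s := by
          ext i; simp
        rw [he, hs.2]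
      · ext i
        simp
  rw [hb, Finset.card_powersetCard, Finset.card_univ, Nat.centralBinom]
  simp

noncomputable def akh (k : ℕ) : ℝ := Akh k / 2^k

lemma akh_zero : akh 0 = 0 := by
  simp [akh, Akh]

lemma akh_succ (k : ℕ) : akh (k+1) = akh k + Zkh k / 2^k := by
  rw [akh, akh, Akh_succ]
  field_simp
  ring

lemma akh_even (m : ℕ) : akh (2*m) = ∑ j ∈ Finset.range m, (Nat.centralBinom j : ℝ) / 4^j := by
  induction m with
  | zero => simpa using akh_zero
  | succ n ih =>
    have h1 : 2*(n+1) = (2*n+1)+1 := by ring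
    rw [h1, akh_succ, Zkh_odd, akh_succ, ih, Finset.sum_range_succ, Zkh_even]
    have h2 : (2:ℝ)^(2*n) = 4^n := by
      rw [pow_mul]; norm_num
    rw [h2]
    ring

lemma cb_bound1 : ∀ j : ℕ, 1 ≤ j → 1/(2*Real.sqrt j) ≤ (Nat.centralBinom j : ℝ)/4^j := by
  intro j hj
  induction j with
  | zero => omega
  | succ n ih =>
    rcases Nat.eq_or_lt_of_le hj with h | h
    · rw [← h]
      norm_num [Nat.centralBinom, Real.sqrt_one]
    · have hn : 1 ≤ n := by omega
      have ihn := ih hn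
      have hrec : ((n:ℝ)+1) * (Nat.centralBinom (n+1) : ℝ) = 2*(2*n+1) * (Nat.centralBinom n : ℝ) := by
        exact_mod_cast congrArg (fun z : ℕ => (z:ℝ)) (Nat.succ_mul_centralBinom_succ n)
      have hu : Real.sqrt n > 0 := Real.sqrt_pos.2 (by positivity)
      have hv : Real.sqrt (n+1) > 0 := Real.sqrt_pos.2 (by positivity)
      have hu2 : Real.sqrt n ^ 2 = n := Real.sq_sqrt (by positivity)
      have hv2 : Real.sqrt (n+1) ^ 2 = (n:ℝ)+1 := Real.sq_sqrt (by positivity)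
      have hcb : (Nat.centralBinom (n+1) : ℝ)/4^(n+1) = (Nat.centralBinom n : ℝ)/4^n * ((2*n+1)/(2*(n+1))) := by
        have h4 : (4:ℝ)^(n+1) = 4^n * 4 := by ring
        field_simp
        linear_combination (2*(4:ℝ)^n) * hrec
      rw [hcb]
      push_cast
      have step1 : 1/(2*Real.sqrt (n+1)) ≤ 1/(2*Real.sqrt n) * ((2*n+1)/(2*(n+1))) := by
        rw [div_mul_div_comm, one_mul, div_le_div_iff₀ (by positivity) (by positivity)]
        have hsq : (2*((n:ℝ)+1) * Real.sqrt n)^2 ≤ ((2*(n:ℝ)+1) * Real.sqrt ((n:ℝ)+1))^2 := by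
          simp only [mul_pow]
          rw [hu2, hv2]
          nlinarith
        have key := Real.sqrt_le_sqrt hsq
        rw [Real.sqrt_sq (by positivity), Real.sqrt_sq (by positivity)] at key
        nlinarith [key]
      refine step1.trans ?_
      apply mul_le_mul_of_nonneg_right ihn
      positivity

lemma cb_bound2 (j : ℕ) : Real.sqrt (j+1) - Real.sqrt j ≤ (Nat.centralBinom j : ℝ)/4^j := by
  rcases Nat.eq_zero_or_pos j with h | h
  · subst h
    simp [Nat.centralBinom, Real.sqrt_one]
  · refine le_trans ?_ (cb_bound1 j h)
    have hu : Real.sqrt j > 0 := Real.sqrt_pos.2 (by positivity)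
    have hu2 : Real.sqrt j ^ 2 = j := Real.sq_sqrt (by positivity)
    have hv2 : Real.sqrt ((j:ℝ)+1) ^ 2 = (j:ℝ)+1 := Real.sq_sqrt (by positivity)
    rw [show (1:ℝ)/(2*Real.sqrt j) = 1/(2*Real.sqrt j) from rfl, le_div_iff₀ (by positivity)]
    nlinarith [sq_nonneg (Real.sqrt ((j:ℝ)+1) - Real.sqrt j), hu2, hv2]

lemma sqrt_le_akh_even (m : ℕ) : Real.sqrt m ≤ akh (2*m) := by
  rw [akh_even]
  have htel : ∑ j ∈ Finset.range m, (Real.sqrt ((j:ℝ)+1) - Real.sqrt j) = Real.sqrt m := by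
    have := Finset.sum_range_sub (fun n : ℕ => Real.sqrt n) m
    simp only [Nat.cast_add, Nat.cast_one] at this
    rw [this]
    simp
  rw [← htel]
  exact Finset.sum_le_sum (fun j _ => cb_bound2 j)

theorem khinchine_lower_bound (k : ℕ) :
    Real.sqrt (k / 2) ≤ (1 / 2 ^ k : ℝ) *
      ∑ ε : Fin k → Bool, |∑ j : Fin k, (if ε j then (1:ℝ) else -1)| := by
  have hAkh : (1 / 2 ^ k : ℝ) *
      ∑ ε : Fin k → Bool, |∑ j : Fin k, (if ε j then (1:ℝ) else -1)| = akh k := by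
    rw [akh, Akh]; ring
  rw [hAkh]
  rcases Nat.even_or_odd k with ⟨m, hm⟩ | ⟨m, hm⟩
  · have hk : k = 2*m := by omega
    calc Real.sqrt ((k:ℝ)/2) = Real.sqrt m := by rw [hk]; push_cast; ring_nf
    _ ≤ akh (2*m) := sqrt_le_akh_even m
    _ = akh k := by rw [hk]
  · have h1 : akh (2*m+2) = akh (2*m+1) := by
      rw [show 2*m+2 = (2*m+1)+1 by ring, akh_succ, Zkh_odd]
      simp
    calc Real.sqrt ((k:ℝ)/2) ≤ Real.sqrt ((m:ℝ)+1) := by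
          apply Real.sqrt_le_sqrt
          rw [hm]; push_cast; linarith
    _ ≤ akh (2*(m+1)) := by
          have := sqrt_le_akh_even (m+1)
          push_cast at this
          exact this
    _ = akh k := by rw [show 2*(m+1) = 2*m+2 by ring, h1, hm]
end
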